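/- For all integers α ≥ 3 and γ ≥ 2, there exist an integer k ≥ 3 and a clique embedding ψ from K_k to the P-graph P(α, γ×2) such that k / wed(ψ) ≥ 2 − 1/(2γ + ⌊(α−1)/2⌋). Consequently, the clique embedding power of P(α, γ×2) is at least 2 − 1/(2γ + ⌊(α−1)/2⌋). -/

import Mathlib

/-- Two vertex sets `A, B` *touch* in `H` if they intersect or there is an edge of `H`
between them. -/
def Touches {V : Type*} (H : SimpleGraph V) (A B : Set V) : Prop :=
  (A ∩ B).Nonempty ∨ ∃ a ∈ A, ∃ b ∈ B, H.Adj a b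

/-- A *clique embedding* from `K_k` to `H`: every vertex `u` of `K_k` is assigned a
nonempty subset `ψ u` of vertices of `H` inducing a connected subgraph, and any two
assigned subsets touch. -/
structure IsCliqueEmbedding {V : Type*} (H : SimpleGraph V) (k : ℕ)
    (ψ : Fin k → Set V) : Prop where
  nonempty : ∀ u, (ψ u).Nonempty
  connected : ∀ u, (H.induce (ψ u)).Connected
  touches : ∀ u v, Touches H (ψ u) (ψ v)

/-- The *weak depth* of an edge `{a,b}`: the number of `u` with `ψ u ∩ {a,b} ≠ ∅`. -/
noncomputable def weakDepth {V : Type*} (k : ℕ) (ψ : Fin k → Set V) (a b : V) : ℕ :=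
  Nat.card {u : Fin k // a ∈ ψ u ∨ b ∈ ψ u}

/-- The *weak edge depth* `wed(ψ)`: the maximum weak depth over all edges of `H`. -/
noncomputable def wed {V : Type*} (H : SimpleGraph V) (k : ℕ) (ψ : Fin k → Set V) : ℕ :=
  sSup {d : ℕ | ∃ a b : V, H.Adj a b ∧ d = weakDepth k ψ a b}

/-- The *clique embedding power* `clemb(H) = sup_{k ≥ 3, ψ} k / wed(ψ)`. -/
noncomputable def clemb {V : Type*} (H : SimpleGraph V) : ℝ :=
  sSup {x : ℝ | ∃ (k : ℕ) (ψ : Fin k → Set V), 3 ≤ k ∧ IsCliqueEmbedding H k ψ ∧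
    x = (k : ℝ) / (wed H k ψ : ℝ)}

/-- Vertices of the P-graph `P(ℓ₀, …, ℓ_{k-1})`: a source `s`, a sink `t`, and, for each
path `i` of length `ℓ i`, internal vertices `inner i j` for `j = 0, …, ℓ i - 2`. -/
inductive PVert (k : ℕ) (ℓ : Fin k → ℕ) : Type where
  | s : PVert k ℓ
  | t : PVert k ℓ
  | inner (i : Fin k) (j : Fin (ℓ i - 1)) : PVert k ℓ

/-- Base adjacency relation of the P-graph. -/
def pRel (k : ℕ) (ℓ : Fin k → ℕ) : PVert k ℓ → PVert k ℓ → Prop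
  | PVert.s, PVert.t => ∃ i, ℓ i = 1
  | PVert.s, PVert.inner _ j => (j : ℕ) = 0
  | PVert.inner i j, PVert.t => (j : ℕ) + 2 = ℓ i
  | PVert.inner i j, PVert.inner i' j' => i = i' ∧ (j : ℕ) + 1 = (j' : ℕ)
  | _, _ => False

/-- The P-graph `P(ℓ₀, …, ℓ_{k-1})`: paths of lengths `ℓ₀, …, ℓ_{k-1}` with all start
vertices identified into `s` and all end vertices identified into `t`. -/
def PGraph (k : ℕ) (ℓ : Fin k → ℕ) : SimpleGraph (PVert k ℓ) :=
  SimpleGraph.fromRel (pRel k ℓ)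

/-- Path lengths of the P-graph `P(α, γ×2)`: one path of length `α` and `γ` paths of
length `2`. -/
def pa2ℓ (α γ : ℕ) : Fin (1 + γ) → ℕ :=
  fun i => if (i : ℕ) = 0 then α else 2

/-- The P-graph `P(α, γ×2)`. -/
def PA2 (α γ : ℕ) : SimpleGraph (PVert (1 + γ) (pa2ℓ α γ)) :=
  PGraph (1 + γ) (pa2ℓ α γ)

/-!
Write `h = ⌊(α - 1)/2⌋`, so that `α ∈ {2h + 1, 2h + 2}`. Number the vertices of the path of
length `α` by their distance `0, …, α` from `s`, and let `bᵢ` be the middle vertex of the `i`-th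
path of length `2`. The `4γ + 2h - 1` branch sets are `γ` copies each of `[0, h) ∪ {bᵢ}`,
`(h + 1, α] ∪ {bᵢ}`, `[0, h]` and `(h, α]`, the `h` windows `[j + 1, j + h + 1]` (`j < h`) and the
`h - 1` sets `[0, j] ∪ [j + h + 3, α] ∪ {b₀}` (`j < h - 1`). They are connected and pairwise
touching. An edge of the long path meets exactly `2γ` sets of the first four kinds and at most `h`
of the last two, and an edge at some `bᵢ` meets `2γ + h` sets, so `wed ≤ 2γ + h` and
`k / wed ≥ (4γ + 2h - 1)/(2γ + h) = 2 - 1/(2γ + h)`. Since `k / wed ≤ |V|` for every clique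
embedding, this ratio also bounds `clemb` from below.
-/

section CliqueEmbedding

variable {V : Type*} {H : SimpleGraph V}

theorem Touches.symm {A B : Set V} (h : Touches H A B) : Touches H B A := by
  rcases h with ⟨x, hxA, hxB⟩ | ⟨a, ha, b, hb, hab⟩
  · exact Or.inl ⟨x, hxB, hxA⟩
  · exact Or.inr ⟨b, hb, a, ha, hab.symm⟩

theorem Touches.of_mem {A B : Set V} {x : V} (hA : x ∈ A) (hB : x ∈ B) : Touches H A B :=
  Or.inl ⟨x, hA, hB⟩

theorem Touches.of_adj {A B : Set V} {a b : V} (ha : a ∈ A) (hb : b ∈ B) (hab : H.Adj a b) :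
    Touches H A B :=
  Or.inr ⟨a, ha, b, hb, hab⟩

theorem weakDepth_le {k : ℕ} (ψ : Fin k → Set V) (a b : V) : weakDepth k ψ a b ≤ k :=
  (Nat.card_le_card_of_injective _ Subtype.val_injective).trans_eq (Nat.card_fin k)

theorem weakDepth_le_wed {k : ℕ} {ψ : Fin k → Set V} {a b : V} (hab : H.Adj a b) :
    weakDepth k ψ a b ≤ wed H k ψ :=
  le_csSup ⟨k, by rintro _ ⟨a, b, -, rfl⟩; exact weakDepth_le ψ a b⟩ ⟨a, b, hab, rfl⟩

theorem wed_le {k B : ℕ} {ψ : Fin k → Set V} (hB : ∀ a b, H.Adj a b → weakDepth k ψ a b ≤ B) :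
    wed H k ψ ≤ B :=
  csSup_le' <| by rintro _ ⟨a, b, hab, rfl⟩; exact hB a b hab

theorem weakDepth_comp_equiv {ι : Type*} {k : ℕ} (φ : ι → Set V) (e : Fin k ≃ ι) (a b : V) :
    weakDepth k (φ ∘ e) a b = Nat.card {x // a ∈ φ x ∨ b ∈ φ x} :=
  Nat.card_congr (e.subtypeEquiv fun _ => Iff.rfl)

/-- Each `ψ u` contains a vertex `v`, and all `u` sent to the same `v` are counted in the weak
depth of an edge at `v`. -/
theorem card_le_card_mul_wed [Finite V] (hadj : ∀ v, ∃ w, H.Adj v w) {k : ℕ}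
    {ψ : Fin k → Set V} (hne : ∀ u, (ψ u).Nonempty) : k ≤ wed H k ψ * Nat.card V := by
  have := Fintype.ofFinite V
  classical
  choose f hf using hne
  choose nbr hnbr using hadj
  have hfiber : ∀ v ∈ Finset.univ, (Finset.univ.filter fun u => f u = v).card ≤ wed H k ψ := by
    intro v _
    refine le_trans ?_ (weakDepth_le_wed (ψ := ψ) (hnbr v))
    rw [← Fintype.card_subtype, ← Nat.card_eq_fintype_card]
    exact Nat.card_le_card_of_injective _
      (Subtype.impEmbedding _ _ fun u hu => Or.inl (hu ▸ hf u)).injective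
  simpa [Nat.card_eq_fintype_card] using
    Finset.card_le_mul_card_image_of_maps_to (fun u _ => Finset.mem_univ (f u)) _ hfiber

theorem div_wed_le_clemb [Finite V] (hadj : ∀ v, ∃ w, H.Adj v w) {k : ℕ} {ψ : Fin k → Set V}
    (hk : 3 ≤ k) (hψ : IsCliqueEmbedding H k ψ) : (k : ℝ) / wed H k ψ ≤ clemb H := by
  refine le_csSup ⟨Nat.card V, ?_⟩ ⟨k, ψ, hk, hψ, rfl⟩
  rintro _ ⟨k', ψ', -, hψ', rfl⟩
  rcases Nat.eq_zero_or_pos (wed H k' ψ') with hw | hw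
  · simp [hw]
  · rw [div_le_iff₀ (by exact_mod_cast hw), mul_comm]
    exact_mod_cast card_le_card_mul_wed hadj hψ'.nonempty

theorem exists_isCliqueEmbedding_wed_le {ι : Type*} [Finite ι] (φ : ι → Set V)
    (hne : ∀ x, (φ x).Nonempty) (hconn : ∀ x, (H.induce (φ x)).Connected)
    (htouch : ∀ x y, Touches H (φ x) (φ y)) {B : ℕ}
    (hB : ∀ a b, H.Adj a b → Nat.card {x // a ∈ φ x ∨ b ∈ φ x} ≤ B) :
    ∃ ψ : Fin (Nat.card ι) → Set V, IsCliqueEmbedding H _ ψ ∧ wed H _ ψ ≤ B := by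
  set e := (Finite.equivFin ι).symm
  refine ⟨φ ∘ e, ⟨fun u => hne _, fun u => hconn _, fun u v => htouch _ _⟩, wed_le ?_⟩
  intro a b hab
  rw [weakDepth_comp_equiv]
  exact hB a b hab

end CliqueEmbedding

theorem two_sub_inv_le_div {m w : ℕ} (hw : 0 < w) (hwm : w ≤ m) :
    2 - 1 / (m : ℝ) ≤ ((2 * m - 1 : ℕ) : ℝ) / w := by
  have hm : (1 : ℝ) ≤ m := by exact_mod_cast hw.trans_le hwm
  have hcast : ((2 * m - 1 : ℕ) : ℝ) = 2 * m - 1 := by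
    rw [Nat.cast_sub (by omega)]; push_cast; ring
  calc 2 - 1 / (m : ℝ) = (2 * m - 1) / m := by field_simp
    _ ≤ (2 * m - 1) / w :=
      div_le_div_of_nonneg_left (by linarith) (by exact_mod_cast hw) (by exact_mod_cast hwm)
    _ = _ := by rw [hcast]

theorem Nat.card_subtype_sum {α β : Type*} [Finite α] [Finite β] (p : α ⊕ β → Prop) :
    Nat.card {x // p x} = Nat.card {a // p (.inl a)} + Nat.card {b // p (.inr b)} := by
  rw [Nat.card_congr Equiv.subtypeSum, Nat.card_sum]

theorem Nat.card_subtype_of_iff_const {α : Type*} {P : α → Prop} {Q : Prop} [Decidable Q]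
    (hP : ∀ x, P x ↔ Q) : Nat.card {x // P x} = if Q then Nat.card α else 0 := by
  split_ifs with hQ
  · exact Nat.card_congr (Equiv.subtypeUnivEquiv fun x => (hP x).2 hQ)
  · simp [hP, hQ]

theorem Nat.card_fin_subtype_of_iff_Ico {n a b : ℕ} {P : Fin n → Prop}
    (hP : ∀ x : Fin n, P x ↔ a ≤ x ∧ (x : ℕ) < b) : Nat.card {x // P x} = min b n - a := by
  rw [← Nat.card_Ico a (min b n), ← Nat.card_eq_finsetCard]
  refine Nat.card_congr
    { toFun := fun x => ⟨x.1, by have := (hP x.1).1 x.2; have := x.1.2; simp; omega⟩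
      invFun := fun m =>
        have hm := Finset.mem_Ico.1 m.2
        ⟨⟨m.1, hm.2.trans_le (min_le_right b n)⟩, (hP _).2 ⟨hm.1, hm.2.trans_le (min_le_left b n)⟩⟩
      left_inv := fun x => rfl
      right_inv := fun m => rfl }

theorem Nat.card_fin_subtype_of_iff_not_Ico {n a b : ℕ} {P : Fin n → Prop}
    (hP : ∀ x : Fin n, P x ↔ ¬(a ≤ x ∧ (x : ℕ) < b)) :
    Nat.card {x // P x} = n - (min b n - a) := by
  classical
  calc Nat.card {x // P x} = Nat.card {x : Fin n // ¬(a ≤ x ∧ (x : ℕ) < b)} :=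
        Nat.card_congr (Equiv.subtypeEquivRight hP)
    _ = n - Nat.card {x : Fin n // a ≤ x ∧ (x : ℕ) < b} := by
        simp only [Nat.card_eq_fintype_card, Fintype.card_subtype_compl, Fintype.card_fin]
    _ = _ := by rw [Nat.card_fin_subtype_of_iff_Ico fun _ => Iff.rfl]

theorem SimpleGraph.reachable_induce_of_adj_succ {W : Type*} {G : SimpleGraph W} {S : Set W}
    (f : ℕ → W) {p q : ℕ} (hpq : p ≤ q) (hS : ∀ r, p ≤ r → r ≤ q → f r ∈ S)
    (hf : ∀ r, p ≤ r → r < q → G.Adj (f r) (f (r + 1))) :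
    (G.induce S).Reachable ⟨f p, hS p le_rfl hpq⟩ ⟨f q, hS q hpq le_rfl⟩ := by
  induction q, hpq using Nat.le_induction with
  | base => rfl
  | succ q hpq ih =>
    have hstep : (G.induce S).Adj ⟨f q, hS q hpq q.le_succ⟩ ⟨f (q + 1), hS _ (by omega) le_rfl⟩ :=
      hf q hpq q.lt_succ_self
    exact (ih (fun r hr hrq => hS r hr (by omega)) fun r hr hrq => hf r hr (by omega)).trans
      hstep.reachable

instance (k : ℕ) (ℓ : Fin k → ℕ) : Finite (PVert k ℓ) :=
  Finite.of_injective (β := Option (Option (Σ i, Fin (ℓ i - 1))))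
    (fun | .s => none | .t => some none | .inner i j => some (some ⟨i, j⟩))
    (by intro a b hab; cases a <;> cases b <;> simp_all)

namespace PA2

variable {α γ : ℕ}

/- `long α γ p` is the vertex at distance `p` from `s` on the path of length `α`, and
`short α γ i` is the middle vertex of the `i`-th path of length `2` (junk values out of range). -/
def long (α γ p : ℕ) : PVert (1 + γ) (pa2ℓ α γ) :=
  if hp0 : p = 0 then .s
  else if hp : p < α then .inner ⟨0, by omega⟩ ⟨p - 1, by simp [pa2ℓ]; omega⟩ else .t

def short (α γ i : ℕ) : PVert (1 + γ) (pa2ℓ α γ) :=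
  if hi : i < γ then .inner ⟨i + 1, by omega⟩ ⟨0, by simp [pa2ℓ]⟩ else .s

def coord (α γ : ℕ) : PVert (1 + γ) (pa2ℓ α γ) → ℕ ⊕ ℕ
  | .s => .inl 0
  | .t => .inl α
  | .inner i j => if (i : ℕ) = 0 then .inl (j + 1) else .inr (i - 1)

theorem coord_long {p : ℕ} (hp : p ≤ α) : coord α γ (long α γ p) = .inl p := by
  unfold long
  split_ifs <;> simp [coord] <;> omega

theorem coord_short {i : ℕ} (hi : i < γ) : coord α γ (short α γ i) = .inr i := by
  simp [short, hi, coord]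

theorem inner_eq_long_or_short (i : Fin (1 + γ)) (j : Fin (pa2ℓ α γ i - 1)) :
    ((i : ℕ) = 0 ∧ (j : ℕ) + 1 < α ∧ PVert.inner i j = long α γ (j + 1)) ∨
      ((i : ℕ) ≠ 0 ∧ (j : ℕ) = 0 ∧ (i : ℕ) - 1 < γ ∧ PVert.inner i j = short α γ (i - 1)) := by
  obtain ⟨i, hi⟩ := i
  obtain ⟨j, hj⟩ := j
  rcases i with _ | k
  · have hjα : j + 1 < α := by simp [pa2ℓ] at hj; omega
    left
    simp [long, hjα]
  · obtain rfl : j = 0 := by simp [pa2ℓ] at hj; omega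
    right
    have hk : k < γ := by omega
    simp [short, hk]

theorem exists_eq_long_or_short (hα : 0 < α) (v : PVert (1 + γ) (pa2ℓ α γ)) :
    (∃ p ≤ α, v = long α γ p) ∨ ∃ i < γ, v = short α γ i := by
  cases v with
  | s => exact Or.inl ⟨0, Nat.zero_le _, by simp [long]⟩
  | t => exact Or.inl ⟨α, le_rfl, by simp [long, hα.ne']⟩
  | inner i j =>
    rcases inner_eq_long_or_short i j with ⟨-, hj, heq⟩ | ⟨-, -, hi, heq⟩
    · exact Or.inl ⟨_, hj.le, heq⟩
    · exact Or.inr ⟨_, hi, heq⟩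

theorem adj_iff {a b : PVert (1 + γ) (pa2ℓ α γ)} :
    (PA2 α γ).Adj a b ↔ a ≠ b ∧ (pRel _ _ a b ∨ pRel _ _ b a) :=
  SimpleGraph.fromRel_adj _ a b

theorem adj_long_succ {p : ℕ} (hp : p < α) : (PA2 α γ).Adj (long α γ p) (long α γ (p + 1)) := by
  rcases Nat.eq_zero_or_pos p with rfl | hp0 <;> rcases (Nat.succ_le_of_lt hp).lt_or_eq with h | h
  · simp [adj_iff, long, h, pRel]
  · subst h
    simp only [adj_iff, long, pRel]
    exact ⟨by simp, Or.inl ⟨⟨0, by omega⟩, by simp [pa2ℓ]⟩⟩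
  · simp [adj_iff, long, h, hp, hp0.ne', pRel, Fin.ext_iff]
    omega
  · simp [adj_iff, long, hp, hp0.ne', pRel, pa2ℓ, h.not_lt]
    omega

theorem adj_long_zero_short {i : ℕ} (hi : i < γ) :
    (PA2 α γ).Adj (long α γ 0) (short α γ i) := by
  simp [adj_iff, long, short, hi, pRel]

theorem adj_short_long {i : ℕ} (hi : i < γ) (hα : 0 < α) :
    (PA2 α γ).Adj (short α γ i) (long α γ α) := by
  simp [adj_iff, long, short, hi, pRel, pa2ℓ, hα.ne']

theorem long_zero : long α γ 0 = .s := rfl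

theorem long_self (hα : α ≠ 0) : long α γ α = .t := by simp [long, hα]

theorem pRel_cases (hα : 2 ≤ α) {a b : PVert (1 + γ) (pa2ℓ α γ)} (hab : pRel _ _ a b) :
    (∃ p < α, a = long α γ p ∧ b = long α γ (p + 1)) ∨
      ∃ i < γ, (a = long α γ 0 ∧ b = short α γ i) ∨ (a = short α γ i ∧ b = long α γ α) := by
  cases a <;> cases b <;> simp only [pRel] at hab
  case s.t =>
    obtain ⟨i, hi⟩ := hab
    simp only [pa2ℓ] at hi
    split at hi <;> omega
  case s.inner i j =>
    rcases inner_eq_long_or_short i j with ⟨-, -, heq⟩ | ⟨-, -, hi, heq⟩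
    · exact Or.inl ⟨0, by omega, long_zero.symm, by rw [heq, hab]⟩
    · exact Or.inr ⟨_, hi, Or.inl ⟨long_zero.symm, heq⟩⟩
  case inner.t i j =>
    rcases inner_eq_long_or_short i j with ⟨hi, hj, heq⟩ | ⟨-, -, hi, heq⟩
    · refine Or.inl ⟨j + 1, hj, heq, ?_⟩
      rw [← long_self (γ := γ) (by omega : α ≠ 0)]
      simp [pa2ℓ, hi] at hab
      congr 1; omega
    · exact Or.inr ⟨_, hi, Or.inr ⟨heq, (long_self (by omega)).symm⟩⟩
  case inner.inner i j i' j' =>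
    obtain ⟨rfl, hjj'⟩ := hab
    rcases inner_eq_long_or_short i j' with ⟨hi, hj', heq'⟩ | ⟨-, hj'0, -⟩
    · rcases inner_eq_long_or_short i j with ⟨-, -, heq⟩ | ⟨hi', -⟩
      · exact Or.inl ⟨j + 1, by omega, heq, by rw [heq', ← hjj']⟩
      · exact absurd hi hi'
    · omega

theorem exists_adj (hα : 0 < α) (v : PVert (1 + γ) (pa2ℓ α γ)) : ∃ w, (PA2 α γ).Adj v w := by
  rcases exists_eq_long_or_short hα v with ⟨p, hp, rfl⟩ | ⟨i, hi, rfl⟩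
  · rcases hp.lt_or_eq with hp | hpα
    · exact ⟨_, adj_long_succ hp⟩
    · rw [hpα]
      have := adj_long_succ (γ := γ) (Nat.sub_lt hα one_pos)
      rw [show α - 1 + 1 = α by omega] at this
      exact ⟨_, this.symm⟩
  · exact ⟨_, (adj_long_zero_short hi).symm⟩

def branchSet (α γ : ℕ) (I J : Set ℕ) : Set (PVert (1 + γ) (pa2ℓ α γ)) :=
  {v | Sum.elim (· ∈ I) (· ∈ J) (coord α γ v)}

variable {I I' J J' : Set ℕ}

theorem long_mem_branchSet {p : ℕ} (hp : p ≤ α) : long α γ p ∈ branchSet α γ I J ↔ p ∈ I := by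
  simp [branchSet, coord_long hp]

theorem short_mem_branchSet {i : ℕ} (hi : i < γ) :
    short α γ i ∈ branchSet α γ I J ↔ i ∈ J := by
  simp [branchSet, coord_short hi]

theorem branchSet_union : branchSet α γ (I ∪ I') J = branchSet α γ I J ∪ branchSet α γ I' J := by
  ext v
  simp only [branchSet, Set.mem_union, Set.mem_ofPred_eq]
  cases coord α γ v <;> simp

theorem reachable_long_of_Icc_subset {p q : ℕ} (hpq : p ≤ q) (hq : q ≤ α) (hI : Set.Icc p q ⊆ I)
    (hp' : long α γ p ∈ branchSet α γ I J) (hq' : long α γ q ∈ branchSet α γ I J) :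
    ((PA2 α γ).induce (branchSet α γ I J)).Reachable ⟨_, hp'⟩ ⟨_, hq'⟩ :=
  SimpleGraph.reachable_induce_of_adj_succ (long α γ) hpq
    (fun _ hpr hrq => (long_mem_branchSet (hrq.trans hq)).2 (hI ⟨hpr, hrq⟩))
    fun _ _ hrq => adj_long_succ (hrq.trans_le hq)

theorem branchSet_connected (hα : 0 < α) [I.OrdConnected] {a : ℕ} (ha : a ∈ I) (haα : a ≤ α)
    (hJ : ∀ i ∈ J, i < γ → 0 ∈ I ∨ α ∈ I) :
    ((PA2 α γ).induce (branchSet α γ I J)).Connected := by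
  have ha' : long α γ a ∈ branchSet α γ I J := (long_mem_branchSet haα).2 ha
  have hreach : ∀ p (hp : p ≤ α) (hpI : p ∈ I), ((PA2 α γ).induce (branchSet α γ I J)).Reachable
      ⟨_, ha'⟩ ⟨_, (long_mem_branchSet hp).2 hpI⟩ := by
    intro p hp hpI
    rcases le_total a p with hap | hpa
    · exact reachable_long_of_Icc_subset hap hp (Set.OrdConnected.out' ha hpI) _ _
    · exact (reachable_long_of_Icc_subset hpa haα (Set.OrdConnected.out' hpI ha) _ _).symm
  rw [SimpleGraph.connected_iff_exists_forall_reachable]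
  refine ⟨⟨_, ha'⟩, fun ⟨v, hv⟩ => ?_⟩
  rcases exists_eq_long_or_short hα v with ⟨p, hp, rfl⟩ | ⟨i, hi, rfl⟩
  · exact hreach p hp ((long_mem_branchSet hp).1 hv)
  · rcases hJ i ((short_mem_branchSet hi).1 hv) hi with h0 | hαI
    · exact (hreach 0 (Nat.zero_le _) h0).trans
        (SimpleGraph.Adj.reachable (adj_long_zero_short hi : (PA2 α γ).Adj _ _))
    · exact (hreach α le_rfl hαI).trans
        (SimpleGraph.Adj.reachable ((adj_short_long hi hα).symm : (PA2 α γ).Adj _ _))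

theorem touches_of_long {p q : ℕ} (hp : p ≤ α) (hq : q ≤ α) (hpI : p ∈ I) (hqI : q ∈ I')
    (hpq : p ≤ q + 1) (hqp : q ≤ p + 1) :
    Touches (PA2 α γ) (branchSet α γ I J) (branchSet α γ I' J') := by
  have hp' := (long_mem_branchSet (γ := γ) (J := J) hp).2 hpI
  have hq' := (long_mem_branchSet (γ := γ) (J := J') hq).2 hqI
  rcases lt_trichotomy p q with h | rfl | h
  · obtain rfl : q = p + 1 := by omega
    exact Touches.of_adj hp' hq' (adj_long_succ (by omega))
  · exact Touches.of_mem hp' hq'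
  · obtain rfl : p = q + 1 := by omega
    exact Touches.of_adj hp' hq' (adj_long_succ (by omega)).symm

theorem touches_of_short (hα : 0 < α) {i : ℕ} (hi : i < γ) (hiJ : i ∈ J) (hI' : 0 ∈ I' ∨ α ∈ I') :
    Touches (PA2 α γ) (branchSet α γ I J) (branchSet α γ I' J') := by
  have hi' := (short_mem_branchSet (α := α) (I := I) hi).2 hiJ
  rcases hI' with h0 | hαI
  · exact Touches.of_adj hi' ((long_mem_branchSet (Nat.zero_le _)).2 h0)
      (adj_long_zero_short hi).symm
  · exact Touches.of_adj hi' ((long_mem_branchSet le_rfl).2 hαI) (adj_short_long hi hα)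

abbrev Label (γ h : ℕ) := Fin γ ⊕ Fin γ ⊕ Fin γ ⊕ Fin γ ⊕ Fin h ⊕ Fin (h - 1)

def longPart (h : ℕ) : Label γ h → Set ℕ
  | .inl _ => Set.Iio h
  | .inr (.inl _) => Set.Ioi (h + 1)
  | .inr (.inr (.inl _)) => Set.Iic h
  | .inr (.inr (.inr (.inl _))) => Set.Ioi h
  | .inr (.inr (.inr (.inr (.inl j)))) => Set.Icc (j + 1) (j + h + 1)
  | .inr (.inr (.inr (.inr (.inr j)))) => Set.Iic j ∪ Set.Ici (j + h + 3)

def shortPart {h : ℕ} : Label γ h → Set ℕ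
  | .inl i | .inr (.inl i) => {(i : ℕ)}
  | .inr (.inr (.inr (.inr (.inr _)))) => {0}
  | _ => ∅

def branch (α γ h : ℕ) (x : Label γ h) : Set (PVert (1 + γ) (pa2ℓ α γ)) :=
  branchSet α γ (longPart h x) (shortPart x)

variable {h : ℕ}

theorem branch_connected (hγ : 0 < γ) (hh : 0 < h) (hα : 2 * h + 1 ≤ α) (x : Label γ h) :
    ((PA2 α γ).induce (branch α γ h x)).Connected := by
  have hα0 : 0 < α := by omega
  rcases x with i | i | - | - | j | j <;> simp only [branch, longPart, shortPart]
  · exact branchSet_connected hα0 (a := 0) (by simp; omega) (Nat.zero_le _) (by simp; omega)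
  · exact branchSet_connected hα0 (a := α) (by simp; omega) le_rfl (by simp; omega)
  · exact branchSet_connected hα0 (a := 0) (by simp) (Nat.zero_le _) (by simp)
  · exact branchSet_connected hα0 (a := α) (by simp; omega) le_rfl (by simp)
  · exact branchSet_connected hα0 (a := j + 1) (by simp) (by omega) (by simp)
  · rw [branchSet_union]
    have h0 : short α γ 0 ∈
        branchSet α γ (Set.Iic j) {0} ∩ branchSet α γ (Set.Ici (j + h + 3)) {0} :=
      ⟨(short_mem_branchSet hγ).2 rfl, (short_mem_branchSet hγ).2 rfl⟩
    exact SimpleGraph.induce_union_connected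
      (branchSet_connected hα0 (a := 0) (by simp) (Nat.zero_le _) (by simp)).preconnected
      (branchSet_connected hα0 (a := α) (by simp; omega) le_rfl (by simp; omega)).preconnected
      ⟨_, h0⟩

theorem touches_branch_of_long {x y : Label γ h} (p q : ℕ)
    (hpq : p ≤ α ∧ q ≤ α ∧ p ∈ longPart h x ∧ q ∈ longPart h y ∧ p ≤ q + 1 ∧ q ≤ p + 1) :
    Touches (PA2 α γ) (branch α γ h x) (branch α γ h y) :=
  touches_of_long hpq.1 hpq.2.1 hpq.2.2.1 hpq.2.2.2.1 hpq.2.2.2.2.1 hpq.2.2.2.2.2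

theorem touches_branch_of_short (hα : 0 < α) {x y : Label γ h} (i : ℕ)
    (hi : i < γ ∧ i ∈ shortPart x ∧ (0 ∈ longPart h y ∨ α ∈ longPart h y)) :
    Touches (PA2 α γ) (branch α γ h x) (branch α γ h y) :=
  touches_of_short hα hi.1 hi.2.1 hi.2.2

theorem touches_window (hh : 0 < h) (hα : 2 * h + 1 ≤ α) (j : Fin h) (y : Label γ h) :
    Touches (PA2 α γ) (branch α γ h (.inr (.inr (.inr (.inr (.inl j)))))) (branch α γ h y) := by
  rcases y with i' | i' | - | - | j' | j'
  · exact touches_branch_of_long (j + 1) j (by simp [longPart]; omega)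
  · exact touches_branch_of_long (j + h + 1) (j + h + 2) (by simp [longPart]; omega)
  · exact touches_branch_of_long (j + 1) (j + 1) (by simp [longPart]; omega)
  · exact touches_branch_of_long (j + h + 1) (j + h + 1) (by simp [longPart]; omega)
  · exact touches_branch_of_long h h (by simp [longPart]; omega)
  · rcases le_or_gt (j : ℕ) j' with hjj' | hjj'
    · exact touches_branch_of_long (j + 1) j (by simp [longPart]; omega)
    · exact touches_branch_of_long (j + h + 1) (j + h + 2) (by simp [longPart]; omega)

theorem branch_touches (hh : 0 < h) (hα : 2 * h + 1 ≤ α) (x y : Label γ h) :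
    Touches (PA2 α γ) (branch α γ h x) (branch α γ h y) := by
  have hα0 : 0 < α := by omega
  rcases x with i | i | - | - | j | j
  · rcases y with i' | i' | - | - | j' | j'
    · exact touches_branch_of_long 0 0 (by simp [longPart]; omega)
    · exact touches_branch_of_short hα0 i (by simp [shortPart, longPart]; omega)
    · exact touches_branch_of_long 0 0 (by simp [longPart]; omega)
    · exact touches_branch_of_short hα0 i (by simp [shortPart, longPart]; omega)
    · exact (touches_window hh hα j' _).symm
    · exact touches_branch_of_long 0 0 (by simp [longPart]; omega)
  · rcases y with i' | i' | - | - | j' | j'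
    · exact touches_branch_of_short hα0 i (by simp [shortPart, longPart]; omega)
    · exact touches_branch_of_long α α (by simp [longPart]; omega)
    · exact touches_branch_of_short hα0 i (by simp [shortPart, longPart])
    · exact touches_branch_of_long α α (by simp [longPart]; omega)
    · exact (touches_window hh hα j' _).symm
    · exact touches_branch_of_long α α (by simp [longPart]; omega)
  · rcases y with i' | i' | - | - | j' | j'
    · exact touches_branch_of_long 0 0 (by simp [longPart]; omega)
    · exact (touches_branch_of_short hα0 i' (by simp [shortPart, longPart])).symm
    · exact touches_branch_of_long 0 0 (by simp [longPart])
    · exact touches_branch_of_long h (h + 1) (by simp [longPart]; omega)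
    · exact (touches_window hh hα j' _).symm
    · exact touches_branch_of_long 0 0 (by simp [longPart])
  · rcases y with i' | i' | - | - | j' | j'
    · exact (touches_branch_of_short hα0 i' (by simp [shortPart, longPart]; omega)).symm
    · exact touches_branch_of_long α α (by simp [longPart]; omega)
    · exact touches_branch_of_long (h + 1) h (by simp [longPart]; omega)
    · exact touches_branch_of_long α α (by simp [longPart]; omega)
    · exact (touches_window hh hα j' _).symm
    · exact touches_branch_of_long α α (by simp [longPart]; omega)
  · exact touches_window hh hα j y
  · rcases y with i' | i' | - | - | j' | j'
    · exact touches_branch_of_long 0 0 (by simp [longPart]; omega)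
    · exact touches_branch_of_long α α (by simp [longPart]; omega)
    · exact touches_branch_of_long 0 0 (by simp [longPart])
    · exact touches_branch_of_long α α (by simp [longPart]; omega)
    · exact (touches_window hh hα j' _).symm
    · exact touches_branch_of_long 0 0 (by simp [longPart])

theorem card_touch_long_le (hh : 0 < h) (p : ℕ) :
    Nat.card {x : Label γ h // p ∈ longPart h x ∨ p + 1 ∈ longPart h x} ≤ 2 * γ + h := by
  simp only [Nat.card_subtype_sum, longPart, Set.mem_Iio, Set.mem_Ioi, Set.mem_Iic, Set.mem_Icc,
    Set.mem_union, Set.mem_Ici]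
  rw [Nat.card_subtype_of_iff_const (Q := p < h), Nat.card_subtype_of_iff_const (Q := h + 1 ≤ p),
    Nat.card_subtype_of_iff_const (Q := p ≤ h), Nat.card_subtype_of_iff_const (Q := h ≤ p),
    Nat.card_fin_subtype_of_iff_Ico (a := p - (h + 1)) (b := p + 1),
    Nat.card_fin_subtype_of_iff_not_Ico (a := p - (h + 1)) (b := p)]
  · simp only [Nat.card_eq_fintype_card, Fintype.card_fin]
    split_ifs <;> omega
  all_goals intro x; omega

theorem card_touch_short_left_le (hh : 0 < h) {i : ℕ} (hi : i < γ) :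
    Nat.card {x : Label γ h // 0 ∈ longPart h x ∨ i ∈ shortPart x} ≤ 2 * γ + h := by
  simp only [Nat.card_subtype_sum, longPart, shortPart, Set.mem_Iio, Set.mem_Ioi, Set.mem_Iic,
    Set.mem_Icc, Set.mem_union, Set.mem_Ici, Set.mem_singleton_iff, Set.mem_empty_iff_false]
  rw [Nat.card_subtype_of_iff_const (Q := True),
    Nat.card_fin_subtype_of_iff_Ico (a := i) (b := i + 1),
    Nat.card_subtype_of_iff_const (Q := True), Nat.card_subtype_of_iff_const (Q := False),
    Nat.card_subtype_of_iff_const (Q := False), Nat.card_subtype_of_iff_const (Q := True)]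
  · simp only [Nat.card_eq_fintype_card, Fintype.card_fin, if_true, if_false]
    omega
  all_goals intro x; simp <;> omega

theorem card_touch_short_right_le (hh : 0 < h) (hα : 2 * h + 1 ≤ α) {i : ℕ} (hi : i < γ) :
    Nat.card {x : Label γ h // i ∈ shortPart x ∨ α ∈ longPart h x} ≤ 2 * γ + h := by
  simp only [Nat.card_subtype_sum, longPart, shortPart, Set.mem_Iio, Set.mem_Ioi, Set.mem_Iic,
    Set.mem_Icc, Set.mem_union, Set.mem_Ici, Set.mem_singleton_iff, Set.mem_empty_iff_false]
  rw [Nat.card_fin_subtype_of_iff_Ico (a := i) (b := i + 1),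
    Nat.card_subtype_of_iff_const (Q := True), Nat.card_subtype_of_iff_const (Q := False),
    Nat.card_subtype_of_iff_const (Q := True), Nat.card_subtype_of_iff_const (Q := False),
    Nat.card_subtype_of_iff_const (Q := True)]
  · simp only [Nat.card_eq_fintype_card, Fintype.card_fin, if_true, if_false]
    omega
  all_goals intro x; simp; omega

theorem card_touch_le_of_adj (hh : 0 < h) (hα : 2 * h + 1 ≤ α)
    {a b : PVert (1 + γ) (pa2ℓ α γ)} (hab : (PA2 α γ).Adj a b) :
    Nat.card {x : Label γ h // a ∈ branch α γ h x ∨ b ∈ branch α γ h x} ≤ 2 * γ + h := by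
  have key : ∀ {a b}, pRel _ _ a b →
      Nat.card {x : Label γ h // a ∈ branch α γ h x ∨ b ∈ branch α γ h x} ≤ 2 * γ + h := by
    intro a b hab
    rcases pRel_cases (by omega) hab with ⟨p, hp, rfl, rfl⟩ | ⟨i, hi, ⟨rfl, rfl⟩ | ⟨rfl, rfl⟩⟩
    · simp only [branch, long_mem_branchSet hp.le, long_mem_branchSet hp]
      exact card_touch_long_le hh p
    · simp only [branch, long_mem_branchSet (Nat.zero_le α), short_mem_branchSet hi]
      exact card_touch_short_left_le hh hi
    · simp only [branch, short_mem_branchSet hi, long_mem_branchSet le_rfl]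
      exact card_touch_short_right_le hh hα hi
  rcases (adj_iff.1 hab).2 with hab | hba
  · exact key hab
  · simpa only [or_comm] using key hba

end PA2

open PA2

/-- For `α ≥ 3` and `γ ≥ 2` there is a clique embedding `ψ : K_k →
P(α, γ×2)` with `k ≥ 3` and `k / wed(ψ) ≥ 2 − 1/(2γ + ⌊(α−1)/2⌋)`; consequently
`clemb(P(α, γ×2)) ≥ 2 − 1/(2γ + ⌊(α−1)/2⌋)`. -/
theorem stmt_6 (α γ : ℕ) (hα : 3 ≤ α) (hγ : 2 ≤ γ) :
    (∃ (k : ℕ) (ψ : Fin k → Set (PVert (1 + γ) (pa2ℓ α γ))), 3 ≤ k ∧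
        IsCliqueEmbedding (PA2 α γ) k ψ ∧
        2 - 1 / ((2 * γ + (α - 1) / 2 : ℕ) : ℝ) ≤ (k : ℝ) / (wed (PA2 α γ) k ψ : ℝ)) ∧
    2 - 1 / ((2 * γ + (α - 1) / 2 : ℕ) : ℝ) ≤ clemb (PA2 α γ) := by
  set h := (α - 1) / 2
  have hh : 0 < h := by omega
  have hαh : 2 * h + 1 ≤ α := by omega
  have hcard : Nat.card (Label γ h) = 2 * (2 * γ + h) - 1 := by simp [Label]; omega
  have hk : 3 ≤ Nat.card (Label γ h) := by omega
  have hconn := branch_connected (α := α) (γ := γ) (by omega) hh hαh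
  obtain ⟨ψ, hψ, hwed⟩ := exists_isCliqueEmbedding_wed_le (branch α γ h)
    (fun x => Set.nonempty_coe_sort.1 (hconn x).nonempty) hconn (branch_touches hh hαh)
    (fun _ _ hab => card_touch_le_of_adj hh hαh hab)
  have hadj := exists_adj (γ := γ) (by omega : 0 < α)
  have hpos : 0 < wed (PA2 α γ) _ ψ := by
    have := card_le_card_mul_wed hadj hψ.nonempty
    exact Nat.pos_of_ne_zero fun h0 => by rw [h0] at this; omega
  have hratio := two_sub_inv_le_div hpos hwed
  rw [← hcard] at hratio
  exact ⟨⟨_, ψ, hk, hψ, hratio⟩, hratio.trans (div_wed_le_clemb hadj hk hψ)⟩
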